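/- arXiv:2603.16043 — 4 statements merged into one kernel-verified Lean document; each statement's English description precedes it below -/
import Mathlib

section
/- Zero-centered group-relative advantage (Proposition 1(i)): Let G ≥ 1, let R^(1), …, R^(G) : Ω → ℝ be i.i.d. random variables on a probability space (Ω, F, P), and let ε > 0. Then for every g ∈ {1, …, G}, the group-relative advantage Â^(g) (which is a bounded, hence integrable, random variable) has expectation E[Â^(g)] = 0. -/
open MeasureTheory ProbabilityTheory

/-- The group mean `R̄_G = (1/G)·Σ_g R^(g)`. -/
noncomputable def groupMean (G : ℕ) (R : Fin G → ℝ) : ℝ :=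
  (∑ g, R g) / G

/-- The group standard deviation `σ̂_G = sqrt((1/G)·Σ_g (R^(g) − R̄_G)²)`. -/
noncomputable def groupStd (G : ℕ) (R : Fin G → ℝ) : ℝ :=
  Real.sqrt ((∑ g, (R g - groupMean G R) ^ 2) / G)

/-- The group-relative advantage `Â^(g) = (R^(g) − R̄_G)/(σ̂_G + ε)`
(with Lean's convention `x / 0 = 0`). -/
noncomputable def advantage (G : ℕ) (R : Fin G → ℝ) (ε : ℝ) (g : Fin G) : ℝ :=
  (R g - groupMean G R) / (groupStd G R + ε)

lemma groupMean_comp_perm (G : ℕ) (σ : Equiv.Perm (Fin G)) (x : Fin G → ℝ) :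
    groupMean G (x ∘ σ) = groupMean G x := by
  unfold groupMean
  congr 1
  exact Equiv.sum_comp σ x

lemma groupStd_comp_perm (G : ℕ) (σ : Equiv.Perm (Fin G)) (x : Fin G → ℝ) :
    groupStd G (x ∘ σ) = groupStd G x := by
  unfold groupStd
  rw [groupMean_comp_perm]
  congr 2
  exact Equiv.sum_comp σ (fun i => (x i - groupMean G x) ^ 2)

lemma advantage_comp_perm (G : ℕ) (σ : Equiv.Perm (Fin G)) (x : Fin G → ℝ) (ε : ℝ) (j : Fin G) :
    advantage G (x ∘ σ) ε j = advantage G x ε (σ j) := by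
  unfold advantage
  rw [groupMean_comp_perm, groupStd_comp_perm]
  rfl

lemma advantage_measurable (G : ℕ) (ε : ℝ) (j : Fin G) :
    Measurable (fun x : Fin G → ℝ => advantage G x ε j) := by
  unfold advantage groupStd groupMean
  fun_prop

lemma abs_advantage_le (G : ℕ) (hG : 1 ≤ G) (x : Fin G → ℝ) {ε : ℝ} (hε : 0 < ε) (j : Fin G) :
    |advantage G x ε j| ≤ Real.sqrt G := by
  have hσ : 0 ≤ groupStd G x := Real.sqrt_nonneg _
  have hd : 0 < groupStd G x + ε := by linarith
  have hGne : (G : ℝ) ≠ 0 := by positivity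
  rw [advantage, abs_div, abs_of_pos hd, div_le_iff₀ hd]
  have h1 : |x j - groupMean G x| ≤ Real.sqrt (∑ i, (x i - groupMean G x) ^ 2) := by
    rw [← Real.sqrt_sq_eq_abs]
    apply Real.sqrt_le_sqrt
    exact Finset.single_le_sum (f := fun i => (x i - groupMean G x) ^ 2)
      (fun i _ => sq_nonneg _) (Finset.mem_univ j)
  have h2 : Real.sqrt (∑ i, (x i - groupMean G x) ^ 2) = Real.sqrt G * groupStd G x := by
    rw [groupStd, ← Real.sqrt_mul (by positivity), mul_div_cancel₀ _ hGne]
  calc |x j - groupMean G x| ≤ Real.sqrt G * groupStd G x := h2 ▸ h1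
    _ ≤ Real.sqrt G * (groupStd G x + ε) := by
        apply mul_le_mul_of_nonneg_left (by linarith) (Real.sqrt_nonneg _)

lemma sum_advantage (G : ℕ) (hG : 1 ≤ G) (x : Fin G → ℝ) (ε : ℝ) :
    ∑ j, advantage G x ε j = 0 := by
  have hGne : (G : ℝ) ≠ 0 := by positivity
  unfold advantage
  rw [← Finset.sum_div]
  have : ∑ j, (x j - groupMean G x) = 0 := by
    rw [Finset.sum_sub_distrib, Finset.sum_const, Finset.card_univ, Fintype.card_fin,
      groupMean, nsmul_eq_mul, mul_div_cancel₀ _ hGne, sub_self]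
  rw [this, zero_div]

/-- Zero-centered group-relative advantage: for i.i.d. rewards and stabilizer `ε > 0`,
the expectation of each group-relative advantage is zero. -/
theorem advantage_expectation_zero
    {Ω : Type*} [MeasureSpace Ω] [IsProbabilityMeasure (ℙ : Measure Ω)]
    (G : ℕ) (hG : 1 ≤ G) (R : Fin G → Ω → ℝ)
    (hmeas : ∀ i, Measurable (R i))
    (hindep : iIndepFun R ℙ)
    (hident : ∀ i j, IdentDistrib (R i) (R j) ℙ ℙ)
    (ε : ℝ) (hε : 0 < ε) (g : Fin G) :
    ∫ ω, advantage G (fun i => R i ω) ε g ∂ℙ = 0 := by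
  set ν : Measure ℝ := Measure.map (R g) ℙ with hν
  have hνprob : IsProbabilityMeasure ν := Measure.isProbabilityMeasure_map (hmeas g).aemeasurable
  set μ : Measure (Fin G → ℝ) := Measure.pi (fun _ => ν) with hμ
  have hμprob : IsProbabilityMeasure μ := by infer_instance
  have hRmeas : Measurable (fun ω i => R i ω) :=
    measurable_pi_lambda _ (fun i => hmeas i)
  -- joint law equals the product measure
  have hjoint : Measure.map (fun ω i => R i ω) ℙ = μ := by
    rw [hμ]
    refine (Measure.pi_eq fun s hs => ?_).symm
    rw [Measure.map_apply hRmeas (MeasurableSet.univ_pi hs)]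
    have hpre : (fun ω i => R i ω) ⁻¹' Set.pi Set.univ s = ⋂ i ∈ Finset.univ, R i ⁻¹' s i := by
      ext ω; simp [Set.mem_pi]
    rw [hpre, hindep.measure_inter_preimage_eq_mul Finset.univ (fun i _ => hs i)]
    refine Finset.prod_congr rfl fun i _ => ?_
    rw [hν, ← (hident i g).map_eq, Measure.map_apply (hmeas i) (hs i)]
  -- transfer the integral to the product measure
  have hmeasA : ∀ j : Fin G, Measurable (fun x : Fin G → ℝ => advantage G x ε j) :=
    fun j => advantage_measurable G ε j
  have htrans : ∀ j : Fin G,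
      ∫ ω, advantage G (fun i => R i ω) ε j ∂ℙ = ∫ x, advantage G x ε j ∂μ := by
    intro j
    rw [← hjoint, integral_map hRmeas.aemeasurable (hmeasA j).aestronglyMeasurable]
  -- exchangeability: all coordinates have the same expectation
  have hexch : ∀ j : Fin G, ∫ x, advantage G x ε j ∂μ = ∫ x, advantage G x ε g ∂μ := by
    intro j
    have hmp : MeasurePreserving
        (MeasurableEquiv.piCongrLeft (fun _ : Fin G => ℝ) (Equiv.swap j g)) μ μ :=
      measurePreserving_piCongrLeft (fun _ => ν) (Equiv.swap j g)
    have := hmp.integral_comp' (f := MeasurableEquiv.piCongrLeft (fun _ : Fin G => ℝ)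
      (Equiv.swap j g)) (g := fun x => advantage G x ε j)
    rw [← this]
    refine integral_congr_ae (Filter.Eventually.of_forall fun x => ?_)
    have hx : (MeasurableEquiv.piCongrLeft (fun _ : Fin G => ℝ) (Equiv.swap j g)) x
        = x ∘ (Equiv.swap j g) := by
      ext i
      have : i = (Equiv.swap j g) ((Equiv.swap j g) i) := by simp
      rw [MeasurableEquiv.coe_piCongrLeft, this,
        Equiv.piCongrLeft_apply_apply]
      simp
    dsimp only
    rw [hx, advantage_comp_perm, Equiv.swap_apply_left]
  -- integrability
  have hint : ∀ j : Fin G, Integrable (fun x => advantage G x ε j) μ := by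
    intro j
    refine Integrable.mono' (integrable_const (Real.sqrt G)) (hmeasA j).aestronglyMeasurable ?_
    exact Filter.Eventually.of_forall fun x => abs_advantage_le G hG x hε j
  -- sum of expectations is zero
  have hsum : ∑ j, ∫ x, advantage G x ε j ∂μ = 0 := by
    rw [← integral_finset_sum _ (fun j _ => hint j)]
    simp [sum_advantage G hG]
  rw [htrans g]
  have : (G : ℝ) * ∫ x, advantage G x ε g ∂μ = 0 := by
    calc (G : ℝ) * ∫ x, advantage G x ε g ∂μ
        = ∑ j : Fin G, ∫ x, advantage G x ε g ∂μ := by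
          rw [Finset.sum_const, Finset.card_univ, Fintype.card_fin, nsmul_eq_mul]
      _ = ∑ j, ∫ x, advantage G x ε j ∂μ := Finset.sum_congr rfl fun j _ => (hexch j).symm
      _ = 0 := hsum
  have hGne : (G : ℝ) ≠ 0 := by positivity
  exact (mul_eq_zero.mp this).resolve_left hGne
end

section
/- Exact unit variance of group-relative advantages for atomless rewards (strengthening of Proposition 1(ii)): Let G ≥ 2, let R^(1), …, R^(G) : Ω → ℝ be i.i.d. random variables on a probability space (Ω, F, P) whose common distribution is atomless, and take stabilizer ε = 0. Then for every g ∈ {1, …, G}, E[Â^(g)] = 0 and Var(Â^(g)) = 1. -/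
open MeasureTheory ProbabilityTheory

section Pointwise
variable {G : ℕ}

lemma groupStd_nonneg (x : Fin G → ℝ) : 0 ≤ groupStd G x := Real.sqrt_nonneg _

lemma groupStd_sq (hG : G ≠ 0) (x : Fin G → ℝ) :
    groupStd G x ^ 2 = (∑ g, (x g - groupMean G x) ^ 2) / G := by
  rw [groupStd, Real.sq_sqrt]
  positivity

lemma sum_sub_mean (hG : G ≠ 0) (x : Fin G → ℝ) :
    ∑ g, (x g - groupMean G x) = 0 := by
  have hGR : (G : ℝ) ≠ 0 := Nat.cast_ne_zero.mpr hG
  simp [Finset.sum_sub_distrib, groupMean]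
  field_simp
  ring

lemma adv_sum_eq_zero (hG : G ≠ 0) (x : Fin G → ℝ) :
    ∑ g, advantage G x 0 g = 0 := by
  simp only [advantage, add_zero, div_eq_mul_inv, ← Finset.sum_mul]
  rw [sum_sub_mean hG x, zero_mul]

lemma term_le_sum (x : Fin G → ℝ) (g : Fin G) :
    (x g - groupMean G x) ^ 2 ≤ ∑ i, (x i - groupMean G x) ^ 2 :=
  Finset.single_le_sum (f := fun i => (x i - groupMean G x) ^ 2)
    (fun i _ => sq_nonneg _) (Finset.mem_univ g)

lemma adv_abs_le (hG : G ≠ 0) (x : Fin G → ℝ) (g : Fin G) :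
    |advantage G x 0 g| ≤ Real.sqrt G := by
  rcases eq_or_lt_of_le (groupStd_nonneg x) with h | h
  · simp [advantage, ← h, Real.sqrt_nonneg]
  · have hd : groupStd G x ≠ 0 := ne_of_gt h
    have h1 : (x g - groupMean G x) ^ 2 ≤ (G : ℝ) * groupStd G x ^ 2 := by
      rw [groupStd_sq hG x]
      have hGR : (0:ℝ) < G := by positivity
      rw [mul_div_cancel₀ _ (ne_of_gt hGR)]
      exact term_le_sum x g
    have h2 : |x g - groupMean G x| ≤ Real.sqrt G * groupStd G x := by
      rw [← Real.sqrt_sq_eq_abs]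
      calc Real.sqrt ((x g - groupMean G x) ^ 2) ≤ Real.sqrt ((G:ℝ) * groupStd G x ^ 2) :=
            Real.sqrt_le_sqrt h1
        _ = Real.sqrt G * groupStd G x := by
            rw [Real.sqrt_mul (by positivity), Real.sqrt_sq (groupStd_nonneg x)]
    rw [advantage, add_zero, abs_div, abs_of_pos h, div_le_iff₀ h]
    exact h2

lemma adv_sq_sum (hG : G ≠ 0) (x : Fin G → ℝ) (hd : groupStd G x ≠ 0) :
    ∑ g, (advantage G x 0 g) ^ 2 = G := by
  have hS : groupStd G x ^ 2 = (∑ g, (x g - groupMean G x) ^ 2) / G := groupStd_sq hG x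
  have hGR : (G : ℝ) ≠ 0 := Nat.cast_ne_zero.mpr hG
  have hSne : (∑ g, (x g - groupMean G x) ^ 2) ≠ 0 := by
    intro h0
    apply hd
    rw [groupStd, h0, zero_div, Real.sqrt_zero]
  simp only [advantage, add_zero, div_pow, ← Finset.sum_div]
  rw [hS]
  field_simp

lemma groupStd_eq_zero_imp (hG : G ≠ 0) (x : Fin G → ℝ) (h : groupStd G x = 0)
    (i j : Fin G) : x i = x j := by
  have hGR : (0:ℝ) < G := by positivity
  have hS : (∑ g, (x g - groupMean G x) ^ 2) = 0 := by
    have := groupStd_sq hG x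
    rw [h] at this
    have : (∑ g, (x g - groupMean G x) ^ 2) / G = 0 := by linarith [this]
    field_simp at this
    simpa using this
  have hall : ∀ k : Fin G, (x k - groupMean G x) ^ 2 = 0 := by
    intro k
    have := (Finset.sum_eq_zero_iff_of_nonneg (fun i _ => sq_nonneg
      (x i - groupMean G x))).mp hS k (Finset.mem_univ k)
    exact this
  have hi := hall i
  have hj := hall j
  have hi' : x i = groupMean G x := by nlinarith [sq_nonneg (x i - groupMean G x)]
  have hj' : x j = groupMean G x := by nlinarith [sq_nonneg (x j - groupMean G x)]
  rw [hi', hj']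

lemma measurable_adv (g : Fin G) : Measurable (fun x : Fin G → ℝ => advantage G x 0 g) := by
  apply Measurable.div
  · exact (measurable_pi_apply g).sub ((Finset.measurable_sum _ (fun i _ => measurable_pi_apply i)).div_const _)
  · apply Measurable.add _ measurable_const
    apply Measurable.sqrt
    apply Measurable.div_const
    exact Finset.measurable_sum _ (fun i _ => ((measurable_pi_apply i).sub ((Finset.measurable_sum _ (fun j _ => measurable_pi_apply j)).div_const _)).pow_const 2)

lemma adv_comp_perm (e : Equiv.Perm (Fin G)) (x : Fin G → ℝ) (g : Fin G) :
    advantage G (x ∘ e) 0 g = advantage G x 0 (e g) := by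
  have hm : groupMean G (x ∘ e) = groupMean G x := by
    unfold groupMean
    rw [show (∑ i, (x ∘ e) i) = ∑ i, x (e i) from rfl, Equiv.sum_comp e x]
  have hs : groupStd G (x ∘ e) = groupStd G x := by
    unfold groupStd
    rw [hm, show (∑ i, ((x ∘ e) i - groupMean G x) ^ 2) = ∑ i, (x (e i) - groupMean G x) ^ 2 from rfl,
      Equiv.sum_comp e (fun i => (x i - groupMean G x) ^ 2)]
  simp [advantage, hm, hs]

end Pointwise

/-- For `G ≥ 2` i.i.d. rewards with atomless common distribution and stabilizer `ε = 0`,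
each group-relative advantage has mean `0` and variance `1`. -/
theorem advantage_mean_zero_variance_one
    {Ω : Type*} [MeasureSpace Ω] [IsProbabilityMeasure (ℙ : Measure Ω)]
    (G : ℕ) (hG : 2 ≤ G) (R : Fin G → Ω → ℝ)
    (hmeas : ∀ i, Measurable (R i))
    (hindep : iIndepFun R ℙ)
    (hident : ∀ i j, IdentDistrib (R i) (R j) ℙ ℙ)
    (hatomless : ∀ (i : Fin G) (c : ℝ), Measure.map (R i) ℙ {c} = 0)
    (g : Fin G) :
    (∫ ω, advantage G (fun i => R i ω) 0 g ∂ℙ = 0) ∧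
      variance (fun ω => advantage G (fun i => R i ω) 0 g) ℙ = 1 := by
  classical
  have hG0 : G ≠ 0 := by omega
  have hGR : (G : ℝ) ≠ 0 := Nat.cast_ne_zero.mpr hG0
  set i0 : Fin G := ⟨0, by omega⟩ with hi0
  set i1 : Fin G := ⟨1, by omega⟩ with hi1
  set μ : Measure ℝ := Measure.map (R i0) ℙ with hμdef
  have hmap : ∀ i, Measure.map (R i) ℙ = μ := fun i => (hident i i0).map_eq
  have hμprob : IsProbabilityMeasure μ := Measure.isProbabilityMeasure_map (hmeas i0).aemeasurable
  set T : Ω → (Fin G → ℝ) := fun ω i => R i ω with hTdef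
  have hTmeas : Measurable T := measurable_pi_lambda _ hmeas
  set ν : Measure (Fin G → ℝ) := Measure.pi (fun _ => μ) with hνdef
  have hνprob : IsProbabilityMeasure ν := by rw [hνdef]; infer_instance
  -- the joint distribution is the product measure
  have hT : Measure.map T ℙ = ν := by
    rw [hνdef]
    refine (Measure.pi_eq fun s hs => ?_).symm
    rw [Measure.map_apply hTmeas (MeasurableSet.univ_pi hs)]
    have hpre : T ⁻¹' (Set.pi Set.univ s) = ⋂ i ∈ Finset.univ, R i ⁻¹' s i := by
      ext ω; simp [Set.mem_pi, hTdef]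
    rw [hpre, hindep.measure_inter_preimage_eq_mul Finset.univ (fun i _ => hs i)]
    exact Finset.prod_congr rfl fun i _ => by
      rw [← hmap i, Measure.map_apply (hmeas i) (hs i)]
  -- permutation invariance of ν
  have hperm : ∀ e : Equiv.Perm (Fin G),
      Measure.map (fun x : Fin G → ℝ => x ∘ e) ν = ν := by
    intro e
    have h1 := MeasureTheory.Measure.pi_map_piCongrLeft e.symm
      (fun _ : Fin G => μ)
    have h2 : ⇑(MeasurableEquiv.piCongrLeft (fun _ : Fin G => ℝ) e.symm)
        = fun x : Fin G → ℝ => x ∘ e := by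
      funext x
      funext j
      have := MeasurableEquiv.piCongrLeft_apply_apply e.symm
        (β := fun _ : Fin G => ℝ) x (e j)
      simpa using this
    rw [h2] at h1
    exact h1
  set f : Fin G → (Fin G → ℝ) → ℝ := fun g x => advantage G x 0 g with hfdef
  have hfm : ∀ g, Measurable (f g) := fun g => measurable_adv g
  have hbound : ∀ g x, ‖f g x‖ ≤ Real.sqrt G := by
    intro g x; rw [Real.norm_eq_abs]; exact adv_abs_le hG0 x g
  have hmem2 : ∀ g, MemLp (f g) 2 ν := fun g =>
    MemLp.of_bound (hfm g).aestronglyMeasurable (Real.sqrt G)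
      (Filter.Eventually.of_forall (hbound g))
  have hInt : ∀ g, Integrable (f g) ν := fun g => (hmem2 g).integrable one_le_two
  have hIntSq : ∀ g, Integrable (fun x => (f g x) ^ 2) ν := fun g => by
    have := (hmem2 g).integrable_sq
    simpa [pow_two] using this
  -- exchangeability: all f g' have the same distribution-statistics
  have key : ∀ (φ : ℝ → ℝ), Measurable φ → ∀ g₁ g₂ : Fin G,
      ∫ x, φ (f g₁ x) ∂ν = ∫ x, φ (f g₂ x) ∂ν := by
    intro φ hφ g₁ g₂
    set e : Equiv.Perm (Fin G) := Equiv.swap g₁ g₂ with hedef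
    have he : e g₂ = g₁ := Equiv.swap_apply_right g₁ g₂
    have hcm : Measurable (fun x : Fin G → ℝ => x ∘ e) :=
      measurable_pi_lambda _ fun j => measurable_pi_apply _
    calc ∫ x, φ (f g₁ x) ∂ν = ∫ x, φ (f g₂ (x ∘ e)) ∂ν := by
          refine integral_congr_ae (Filter.Eventually.of_forall fun x => ?_)
          rw [hfdef]; simp only
          rw [adv_comp_perm e x g₂, he]
      _ = ∫ y, φ (f g₂ y) ∂(Measure.map (fun x : Fin G → ℝ => x ∘ e) ν) := by
          rw [integral_map hcm.aemeasurable]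
          exact (hφ.comp (hfm g₂)).aestronglyMeasurable.mono_measure
            (by rw [hperm e]) |>.congr (Filter.Eventually.of_forall fun _ => rfl)
      _ = ∫ x, φ (f g₂ x) ∂ν := by rw [hperm e]
  -- mean zero over ν
  have hmean : ∫ x, f g x ∂ν = 0 := by
    have hsum0 : ∑ g' : Fin G, ∫ x, f g' x ∂ν = 0 := by
      rw [← integral_finset_sum _ (fun g' _ => hInt g')]
      simp only [hfdef, adv_sum_eq_zero hG0]
      exact integral_zero _ _
    have hall : ∀ g' : Fin G, ∫ x, f g' x ∂ν = ∫ x, f g x ∂ν := fun g' =>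
      key id measurable_id g' g
    rw [Finset.sum_congr rfl (fun g' _ => hall g'), Finset.sum_const,
      Finset.card_univ, Fintype.card_fin, nsmul_eq_mul] at hsum0
    exact (mul_eq_zero.mp hsum0).resolve_left hGR
  -- the null set where the std vanishes
  have hstdnull : ν {x : Fin G → ℝ | groupStd G x = 0} = 0 := by
    refine measure_mono_null (fun x hx => groupStd_eq_zero_imp hG0 x hx i0 i1) ?_
    show ν {x : Fin G → ℝ | x i0 = x i1} = 0
    have hmeasset : MeasurableSet {x : Fin G → ℝ | x i0 = x i1} :=
      measurableSet_eq_fun (measurable_pi_apply i0) (measurable_pi_apply i1)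
    have hTap : ν {x : Fin G → ℝ | x i0 = x i1}
        = ℙ (T ⁻¹' {x : Fin G → ℝ | x i0 = x i1}) := by
      rw [← hT]; exact Measure.map_apply hTmeas hmeasset
    have hpre : T ⁻¹' {x : Fin G → ℝ | x i0 = x i1}
        = (fun ω => (R i0 ω, R i1 ω)) ⁻¹' {p : ℝ × ℝ | p.1 = p.2} := rfl
    rw [hTap, hpre]
    have hne : i0 ≠ i1 := by simp [hi0, hi1, Fin.ext_iff]
    have hind2 : IndepFun (R i0) (R i1) ℙ := hindep.indepFun hne
    have hprod : Measure.map (fun ω => (R i0 ω, R i1 ω)) ℙ = μ.prod μ := by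
      rw [(indepFun_iff_map_prod_eq_prod_map_map (hmeas i0).aemeasurable
        (hmeas i1).aemeasurable).mp hind2, hmap i0, hmap i1]
    have hdiagmeas : MeasurableSet {p : ℝ × ℝ | p.1 = p.2} :=
      measurableSet_eq_fun measurable_fst measurable_snd
    rw [← Measure.map_apply ((hmeas i0).prodMk (hmeas i1)) hdiagmeas, hprod,
      Measure.prod_apply hdiagmeas]
    have hz : ∀ x : ℝ, μ (Prod.mk x ⁻¹' {p : ℝ × ℝ | p.1 = p.2}) = 0 := by
      intro x
      have hset : Prod.mk x ⁻¹' {p : ℝ × ℝ | p.1 = p.2} = {x} := by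
        ext y; simp [eq_comm]
      rw [hset, hμdef]
      exact hatomless i0 x
    rw [lintegral_congr hz]
    simp
  -- second moment one over ν
  have hsecond : ∫ x, (f g x) ^ 2 ∂ν = 1 := by
    have hae : ∀ᵐ x ∂ν, ∑ g' : Fin G, (f g' x) ^ 2 = (G : ℝ) := by
      have : ∀ᵐ x ∂ν, groupStd G x ≠ 0 := by
        refine ae_iff.mpr ?_
        simpa using hstdnull
      filter_upwards [this] with x hx
      exact adv_sq_sum hG0 x hx
    have hsumsq : ∑ g' : Fin G, ∫ x, (f g' x) ^ 2 ∂ν = (G : ℝ) := by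
      rw [← integral_finset_sum _ (fun g' _ => hIntSq g'), integral_congr_ae hae]
      simp [measure_univ]
    have hall : ∀ g' : Fin G, ∫ x, (f g' x) ^ 2 ∂ν = ∫ x, (f g x) ^ 2 ∂ν := fun g' =>
      key (fun t => t ^ 2) (measurable_id.pow_const 2) g' g
    rw [Finset.sum_congr rfl (fun g' _ => hall g'), Finset.sum_const,
      Finset.card_univ, Fintype.card_fin, nsmul_eq_mul] at hsumsq
    have h1 : (G : ℝ) * ∫ x, (f g x) ^ 2 ∂ν = (G : ℝ) * 1 := by
      rw [mul_one]; exact hsumsq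
    exact mul_left_cancel₀ hGR h1
  -- transfer to Ω
  have hXeq : (fun ω => advantage G (fun i => R i ω) 0 g) = fun ω => f g (T ω) := rfl
  have hmean' : ∫ ω, f g (T ω) ∂ℙ = 0 := by
    rw [← integral_map hTmeas.aemeasurable (hfm g).aestronglyMeasurable, hT]
    exact hmean
  have hsecond' : ∫ ω, (f g (T ω)) ^ 2 ∂ℙ = 1 := by
    rw [← integral_map (f := fun x => (f g x) ^ 2) hTmeas.aemeasurable
      ((hfm g).pow_const 2).aestronglyMeasurable, hT]
    exact hsecond
  refine ⟨by rw [hXeq]; exact hmean', ?_⟩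
  have hmemΩ : MemLp (fun ω => f g (T ω)) 2 ℙ :=
    MemLp.of_bound ((hfm g).comp hTmeas).aestronglyMeasurable (Real.sqrt G)
      (Filter.Eventually.of_forall fun ω => hbound g (T ω))
  rw [hXeq, variance_eq_sub hmemΩ]
  have h2 : (fun ω => f g (T ω)) ^ 2 = fun ω => (f g (T ω)) ^ 2 := rfl
  rw [h2]
  -- μ[X^2] notation unfolds to the integral
  simp only [hsecond', hmean']
  norm_num
end

section
/- Asymptotic unit variance of the group-relative advantage (Proposition 1(ii)): Let R^(1), R^(2), R^(3), … : Ω → ℝ be an i.i.d. sequence of random variables on a probability space (Ω, F, P) whose common distribution is not a Dirac measure. For each G ≥ 2, let Â^(1)_G denote the group-relative advantage of the first coordinate computed from the group R^(1), …, R^(G) with stabilizer ε = 0. Then E[Â^(1)_G] = 0 for every G ≥ 2, and Var(Â^(1)_G) → 1 as G → ∞. -/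
open MeasureTheory ProbabilityTheory Filter

noncomputable def auxMean (n : ℕ) (x : Fin n → ℝ) : ℝ := (∑ i, x i) / n

noncomputable def auxF (n : ℕ) (j : Fin n) (x : Fin n → ℝ) : ℝ :=
  (x j - auxMean n x) / Real.sqrt ((∑ i, (x i - auxMean n x) ^ 2) / n)

lemma auxMean_measurable (n : ℕ) : Measurable (auxMean n) := by
  unfold auxMean
  exact (Finset.measurable_sum _ fun i _ => measurable_pi_apply i).div_const _

lemma auxF_measurable (n : ℕ) (j : Fin n) : Measurable (auxF n j) := by
  unfold auxF
  have hm := auxMean_measurable n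
  have h1 : Measurable fun x : Fin n → ℝ => x j - auxMean n x :=
    (measurable_pi_apply j).sub hm
  have h2 : Measurable fun x : Fin n → ℝ =>
      Real.sqrt ((∑ i, (x i - auxMean n x) ^ 2) / n) := by
    refine Real.continuous_sqrt.measurable.comp ?_
    exact ((Finset.measurable_sum _ fun i _ =>
      ((measurable_pi_apply i).sub hm).pow_const 2).div_const _)
  exact h1.div h2

lemma auxF_comp_swap (n : ℕ) (j : Fin n) (x : Fin n → ℝ) [NeZero n] :
    auxF n j x = auxF n 0 (x ∘ Equiv.swap 0 j) := by
  have hmean : auxMean n (x ∘ Equiv.swap 0 j) = auxMean n x := by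
    unfold auxMean
    rw [show (∑ i, (x ∘ Equiv.swap 0 j) i) = ∑ i, x i from Equiv.sum_comp _ x]
  have hsq : (∑ i, ((x ∘ Equiv.swap 0 j) i - auxMean n x) ^ 2)
      = ∑ i, (x i - auxMean n x) ^ 2 :=
    Equiv.sum_comp (Equiv.swap 0 j) (fun i => (x i - auxMean n x) ^ 2)
  unfold auxF
  rw [hmean, hsq]
  simp [Equiv.swap_apply_left]

lemma aux_map_pi {Ω : Type*} [MeasureSpace Ω] [IsProbabilityMeasure (ℙ : Measure Ω)]
    (R : ℕ → Ω → ℝ) (hmeas : ∀ i, Measurable (R i))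
    (hindep : iIndepFun R ℙ)
    (hident : ∀ i j, IdentDistrib (R i) (R j) ℙ ℙ)
    (G : ℕ) (e : Fin G → ℕ) (he : Function.Injective e) :
    Measure.map (fun ω (i : Fin G) => R (e i) ω) ℙ
      = Measure.pi (fun _ => Measure.map (R 0) ℙ) := by
  have hX : Measurable fun ω (i : Fin G) => R (e i) ω :=
    measurable_pi_lambda _ fun i => hmeas (e i)
  refine (Measure.pi_eq ?_).symm
  intro s hs
  rw [Measure.map_apply hX (MeasurableSet.univ_pi hs)]
  classical
  set t : ℕ → Set ℝ := fun nn => if h : ∃ i, e i = nn then s h.choose else Set.univ with ht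
  have hte : ∀ i, t (e i) = s i := by
    intro i; rw [ht]; dsimp only; rw [dif_pos ⟨i, rfl⟩]
    exact congrArg s (he (⟨i, rfl⟩ : ∃ j, e j = e i).choose_spec)
  have htm : ∀ nn, MeasurableSet (t nn) := by
    intro nn; rw [ht]; dsimp only; split
    · exact hs _
    · exact MeasurableSet.univ
  have hpre : (fun ω (i : Fin G) => R (e i) ω) ⁻¹' Set.pi Set.univ s
      = ⋂ nn ∈ Finset.image e Finset.univ, R nn ⁻¹' t nn := by
    ext ω
    simp only [Set.mem_preimage, Set.mem_pi, Set.mem_univ, forall_true_left, Set.mem_iInter,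
      Finset.mem_image, Finset.mem_univ, true_and, exists_prop]
    constructor
    · rintro h nn ⟨i, rfl⟩; rw [hte]; exact h i
    · intro h i; have := h (e i) ⟨i, rfl⟩; rwa [hte] at this
  rw [hpre, hindep.measure_inter_preimage_eq_mul _ (fun nn _ => htm nn),
    Finset.prod_image (fun i _ j _ h => he h)]
  refine Finset.prod_congr rfl fun i _ => ?_
  rw [hte, ← Measure.map_apply (hmeas (e i)) (hs i), (hident (e i) 0).map_eq]

/-- The group mean of the first `G` rewards, `R̄_G = (1/G)·Σ_{g<G} R^(g)`, pointwise in `ω`. -/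
noncomputable def seqGroupMean {Ω : Type*} (R : ℕ → Ω → ℝ) (G : ℕ) (ω : Ω) : ℝ :=
  (∑ g ∈ Finset.range G, R g ω) / G

/-- The group standard deviation of the first `G` rewards,
`σ̂_G = sqrt((1/G)·Σ_{g<G} (R^(g) − R̄_G)²)`, pointwise in `ω`. -/
noncomputable def seqGroupStd {Ω : Type*} (R : ℕ → Ω → ℝ) (G : ℕ) (ω : Ω) : ℝ :=
  Real.sqrt ((∑ g ∈ Finset.range G, (R g ω - seqGroupMean R G ω) ^ 2) / G)

/-- The group-relative advantage of coordinate `g` within the first `G` rewards,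
`Â^(g)_G = (R^(g) − R̄_G)/(σ̂_G + ε)` (with Lean's convention `x / 0 = 0`). -/
noncomputable def seqAdvantage {Ω : Type*} (R : ℕ → Ω → ℝ) (ε : ℝ) (G g : ℕ) (ω : Ω) : ℝ :=
  (R g ω - seqGroupMean R G ω) / (seqGroupStd R G ω + ε)

section PW
variable {Ω : Type*} (R : ℕ → Ω → ℝ) (G : ℕ)

lemma seqGroupStd_nonneg (ω : Ω) : 0 ≤ seqGroupStd R G ω := Real.sqrt_nonneg _

lemma seqAdvantage_eq_auxF (g : ℕ) (hg : g < G) (ω : Ω) :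
    seqAdvantage R 0 G g ω = auxF G ⟨g, hg⟩ (fun i : Fin G => R i ω) := by
  have h1 : (∑ i : Fin G, R i ω) = ∑ k ∈ Finset.range G, R k ω :=
    Fin.sum_univ_eq_sum_range (fun k => R k ω) G
  have h2 : ∀ m : ℝ, (∑ i : Fin G, (R i ω - m) ^ 2)
      = ∑ k ∈ Finset.range G, (R k ω - m) ^ 2 :=
    fun m => Fin.sum_univ_eq_sum_range (fun k => (R k ω - m) ^ 2) G
  simp only [seqAdvantage, seqGroupStd, seqGroupMean, auxF, auxMean, add_zero, h1, h2]

lemma aux_sum_sq_eq (hG : 0 < G) (ω : Ω) :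
    ∑ g ∈ Finset.range G, (R g ω - seqGroupMean R G ω) ^ 2
      = G * (seqGroupStd R G ω) ^ 2 := by
  have hnn : (0:ℝ) ≤ (∑ g ∈ Finset.range G, (R g ω - seqGroupMean R G ω) ^ 2) / G :=
    div_nonneg (Finset.sum_nonneg fun _ _ => sq_nonneg _) (Nat.cast_nonneg G)
  have : (seqGroupStd R G ω) ^ 2
      = (∑ g ∈ Finset.range G, (R g ω - seqGroupMean R G ω) ^ 2) / G :=
    Real.sq_sqrt hnn
  rw [this]
  field_simp

lemma aux_sum_adv (hG : 0 < G) (ω : Ω) :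
    ∑ g ∈ Finset.range G, seqAdvantage R 0 G g ω = 0 := by
  simp only [seqAdvantage, ← Finset.sum_div]
  have : ∑ g ∈ Finset.range G, (R g ω - seqGroupMean R G ω) = 0 := by
    rw [Finset.sum_sub_distrib, Finset.sum_const, Finset.card_range, seqGroupMean,
      nsmul_eq_mul]
    have hGne : (G:ℝ) ≠ 0 := Nat.cast_ne_zero.mpr hG.ne'
    field_simp
    ring
  rw [this, zero_div]

lemma aux_sum_adv_sq (hG : 0 < G) (ω : Ω) :
    ∑ g ∈ Finset.range G, (seqAdvantage R 0 G g ω) ^ 2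
      = if seqGroupStd R G ω = 0 then 0 else (G:ℝ) := by
  by_cases h : seqGroupStd R G ω = 0
  · simp [seqAdvantage, h]
  · rw [if_neg h]
    simp only [seqAdvantage, add_zero, div_pow, ← Finset.sum_div]
    rw [aux_sum_sq_eq R G hG ω]
    have h2 : (seqGroupStd R G ω) ^ 2 ≠ 0 := pow_ne_zero _ h
    field_simp

lemma seqGroupMean_measurable [MeasurableSpace Ω] (hmeas : ∀ i, Measurable (R i)) :
    Measurable (seqGroupMean R G) :=
  (Finset.measurable_sum _ fun i _ => hmeas i).div_const _

lemma seqGroupStd_measurable [MeasurableSpace Ω] (hmeas : ∀ i, Measurable (R i)) :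
    Measurable (seqGroupStd R G) := by
  refine Real.continuous_sqrt.measurable.comp ?_
  exact (Finset.measurable_sum _ fun i _ =>
    ((hmeas i).sub (seqGroupMean_measurable R G hmeas)).pow_const 2).div_const _

lemma seqAdvantage_measurable [MeasurableSpace Ω] (hmeas : ∀ i, Measurable (R i)) (g : ℕ) :
    Measurable (seqAdvantage R 0 G g) := by
  unfold seqAdvantage
  exact ((hmeas g).sub (seqGroupMean_measurable R G hmeas)).div
    ((seqGroupStd_measurable R G hmeas).add measurable_const)

lemma seqAdvantage_abs_le (hG : 0 < G) (g : ℕ) (hg : g < G) (ω : Ω) :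
    |seqAdvantage R 0 G g ω| ≤ Real.sqrt G := by
  by_cases h : seqGroupStd R G ω = 0
  · simp [seqAdvantage, h, Real.sqrt_nonneg]
  · have hpos : 0 < seqGroupStd R G ω := lt_of_le_of_ne (seqGroupStd_nonneg R G ω) (Ne.symm h)
    have hsq : (R g ω - seqGroupMean R G ω) ^ 2
        ≤ ∑ k ∈ Finset.range G, (R k ω - seqGroupMean R G ω) ^ 2 :=
      Finset.single_le_sum (f := fun k => (R k ω - seqGroupMean R G ω) ^ 2)
        (fun k _ => sq_nonneg _) (Finset.mem_range.mpr hg)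
    rw [aux_sum_sq_eq R G hG ω] at hsq
    have habs : |R g ω - seqGroupMean R G ω| ≤ Real.sqrt G * seqGroupStd R G ω := by
      have := Real.sqrt_le_sqrt hsq
      rw [Real.sqrt_sq_eq_abs] at this
      calc |R g ω - seqGroupMean R G ω| ≤ Real.sqrt ((G:ℝ) * (seqGroupStd R G ω)^2) := by
            exact le_trans (le_of_eq rfl) this
        _ = Real.sqrt G * seqGroupStd R G ω := by
            rw [Real.sqrt_mul (Nat.cast_nonneg G), Real.sqrt_sq hpos.le]
    rw [seqAdvantage, add_zero, abs_div, abs_of_pos hpos, div_le_iff₀ hpos]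
    exact habs

lemma seqGroupStd_eq_zero_iff (hG : 0 < G) (ω : Ω) :
    seqGroupStd R G ω = 0 ↔ ∀ g < G, R g ω = R 0 ω := by
  rw [seqGroupStd, Real.sqrt_eq_zero (div_nonneg
    (Finset.sum_nonneg fun _ _ => sq_nonneg _) (Nat.cast_nonneg G))]
  have hGne : (G:ℝ) ≠ 0 := Nat.cast_ne_zero.mpr hG.ne'
  rw [div_eq_zero_iff, or_iff_left hGne,
    Finset.sum_eq_zero_iff_of_nonneg (fun k _ => sq_nonneg _)]
  constructor
  · intro h g hg
    have h0 := h 0 (Finset.mem_range.mpr hG)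
    have hgg := h g (Finset.mem_range.mpr hg)
    rw [pow_eq_zero_iff (two_ne_zero), sub_eq_zero] at h0 hgg
    rw [hgg, h0]
  · intro h k hk
    rw [Finset.mem_range] at hk
    have hmean : seqGroupMean R G ω = R 0 ω := by
      rw [seqGroupMean]
      rw [Finset.sum_congr rfl (fun g hg => h g (Finset.mem_range.mp hg))]
      rw [Finset.sum_const, Finset.card_range, nsmul_eq_mul]
      field_simp
    rw [h k hk, hmean, sub_self]
    simp

end PW

section Prob
variable {Ω : Type*} [MeasureSpace Ω] [IsProbabilityMeasure (ℙ : Measure Ω)]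
  (R : ℕ → Ω → ℝ)

lemma aux_diag_measurable : MeasurableSet {p : ℝ × ℝ | p.1 = p.2} :=
  measurableSet_eq_fun measurable_fst measurable_snd

lemma aux_pair_prob (hmeas : ∀ i, Measurable (R i)) (hindep : iIndepFun R ℙ)
    (hident : ∀ i j, IdentDistrib (R i) (R j) ℙ ℙ) (i j : ℕ) (hij : i ≠ j) :
    ℙ {ω | R i ω = R j ω}
      = (Measure.map (R 0) ℙ).prod (Measure.map (R 0) ℙ) {p : ℝ × ℝ | p.1 = p.2} := by
  have hpair : Measurable fun ω => (R i ω, R j ω) := (hmeas i).prodMk (hmeas j)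
  have hlaw : Measure.map (fun ω => (R i ω, R j ω)) ℙ
      = (Measure.map (R 0) ℙ).prod (Measure.map (R 0) ℙ) := by
    rw [(indepFun_iff_map_prod_eq_prod_map_map (hmeas i).aemeasurable
      (hmeas j).aemeasurable).mp (hindep.indepFun hij),
      (hident i 0).map_eq, (hident j 0).map_eq]
  have : {ω | R i ω = R j ω} = (fun ω => (R i ω, R j ω)) ⁻¹' {p : ℝ × ℝ | p.1 = p.2} := rfl
  rw [this, ← Measure.map_apply hpair aux_diag_measurable, hlaw]

lemma aux_q_lt_one (hmeas : ∀ i, Measurable (R i)) (hindep : iIndepFun R ℙ)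
    (hident : ∀ i j, IdentDistrib (R i) (R j) ℙ ℙ)
    (hnotdirac : ¬ ∃ c : ℝ, Measure.map (R 0) ℙ {c} = 1) :
    ℙ {ω | R 0 ω = R 1 ω} < 1 := by
  set ν := Measure.map (R 0) ℙ with hν
  haveI : IsProbabilityMeasure ν := Measure.isProbabilityMeasure_map (hmeas 0).aemeasurable
  rcases lt_or_eq_of_le (prob_le_one (μ := ℙ) (s := {ω | R 0 ω = R 1 ω})) with h | h
  · exact h
  exfalso
  have hq1 : ν.prod ν {p : ℝ × ℝ | p.1 = p.2} = 1 := by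
    rw [← aux_pair_prob R hmeas hindep hident 0 1 (by norm_num)]
    exact h
  have hfm : Measurable fun x : ℝ => ν (Prod.mk x ⁻¹' {p : ℝ × ℝ | p.1 = p.2}) :=
    measurable_measure_prodMk_left aux_diag_measurable
  have hpre : ∀ x : ℝ, Prod.mk x ⁻¹' {p : ℝ × ℝ | p.1 = p.2} = {x} := by
    intro x; ext y; simp [eq_comm]
  have hint : ∫⁻ x, ν {x} ∂ν = 1 := by
    rw [Measure.prod_apply aux_diag_measurable] at hq1
    simpa [hpre] using hq1
  have hfm' : Measurable fun x : ℝ => ν {x} := by simpa [hpre] using hfm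
  have hle : ∀ x : ℝ, ν {x} ≤ 1 := fun x => prob_le_one
  have hsub : ∫⁻ x, (1 - ν {x}) ∂ν = 0 := by
    rw [lintegral_sub hfm' (by rw [hint]; exact ENNReal.one_ne_top)
      (Filter.Eventually.of_forall hle), hint, lintegral_one, measure_univ, tsub_self]
  have hae := (lintegral_eq_zero_iff (measurable_const.sub hfm')).mp hsub
  by_cases hex : ∃ c : ℝ, ν {c} = 1
  · exact hnotdirac hex
  push_neg at hex
  have : {x : ℝ | ¬ (1 - ν {x} = 0)} = Set.univ := by
    ext x
    simp only [Set.mem_setOf_eq, Set.mem_univ, iff_true]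
    rw [tsub_eq_zero_iff_le]
    intro h1
    exact hex x (le_antisymm (hle x) h1)
  have h0 : ν {x : ℝ | ¬ (1 - ν {x} = 0)} = 0 := hae
  rw [this, measure_univ] at h0
  exact one_ne_zero h0

lemma aux_inter_prob (hmeas : ∀ i, Measurable (R i))
    (hindep : iIndepFun R ℙ)
    (hident : ∀ i j, IdentDistrib (R i) (R j) ℙ ℙ) (K : ℕ) :
    ℙ (⋂ k ∈ Finset.range K, {ω | R (2*k) ω = R (2*k+1) ω})
      = (ℙ {ω | R 0 ω = R 1 ω}) ^ K := by
  induction K with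
  | zero => simp
  | succ K ih =>
    have hq : ℙ {ω | R (2*K) ω = R (2*K+1) ω} = ℙ {ω | R 0 ω = R 1 ω} := by
      rw [aux_pair_prob R hmeas hindep hident (2*K) (2*K+1) (by omega),
        aux_pair_prob R hmeas hindep hident 0 1 (by norm_num)]
    rw [Finset.range_add_one, Finset.set_biInter_insert]
    set S : Finset ℕ := {2*K, 2*K+1} with hS
    set T : Finset ℕ := Finset.range (2*K) with hT
    have hST : Disjoint S T := by
      rw [Finset.disjoint_left]
      intro a ha haT
      rw [hS] at ha
      rw [hT, Finset.mem_range] at haT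
      simp only [Finset.mem_insert, Finset.mem_singleton] at ha
      omega
    have hIF := hindep.indepFun_finset S T hST hmeas
    have hmem1 : 2*K ∈ S := by simp [hS]
    have hmem2 : 2*K+1 ∈ S := by simp [hS]
    set ES : Set (↥S → ℝ) :=
      {x | x ⟨2*K, hmem1⟩ = x ⟨2*K+1, hmem2⟩} with hES
    set ET : Set (↥T → ℝ) :=
      ⋂ (k : ℕ) (hk : k < K), {x | x ⟨2*k, Finset.mem_range.mpr (by omega)⟩
        = x ⟨2*k+1, Finset.mem_range.mpr (by omega)⟩} with hET
    have hESm : MeasurableSet ES :=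
      measurableSet_eq_fun (measurable_pi_apply _) (measurable_pi_apply _)
    have hETm : MeasurableSet ET :=
      MeasurableSet.iInter fun k => MeasurableSet.iInter fun hk =>
        measurableSet_eq_fun (measurable_pi_apply _) (measurable_pi_apply _)
    have hpre1 : (fun a (i : ↥S) => R (↑i) a) ⁻¹' ES
        = {ω | R (2*K) ω = R (2*K+1) ω} := rfl
    have hpre2 : (fun a (i : ↥T) => R (↑i) a) ⁻¹' ET
        = ⋂ k ∈ Finset.range K, {ω | R (2*k) ω = R (2*k+1) ω} := by
      ext ω
      simp only [Set.mem_preimage, hET, Set.mem_iInter, Set.mem_setOf_eq,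
        Finset.mem_range]
    have := hIF.measure_inter_preimage_eq_mul ES ET hESm hETm
    rw [hpre1, hpre2] at this
    rw [this, ih, hq, pow_succ, mul_comm]

lemma aux_adv_identDistrib (hmeas : ∀ i, Measurable (R i))
    (hindep : iIndepFun R ℙ)
    (hident : ∀ i j, IdentDistrib (R i) (R j) ℙ ℙ)
    (G g : ℕ) (hg : g < G) :
    IdentDistrib (seqAdvantage R 0 G g) (seqAdvantage R 0 G 0) ℙ ℙ := by
  have hG : 0 < G := lt_of_le_of_lt (Nat.zero_le g) hg
  haveI : NeZero G := ⟨hG.ne'⟩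
  set j : Fin G := ⟨g, hg⟩ with hj
  set σ := Equiv.swap (0 : Fin G) j with hσ
  have base : IdentDistrib (fun ω (i : Fin G) => R (σ i) ω)
      (fun ω (i : Fin G) => R i ω) ℙ ℙ := by
    refine ⟨(measurable_pi_lambda _ fun i => hmeas _).aemeasurable,
      (measurable_pi_lambda _ fun i => hmeas _).aemeasurable, ?_⟩
    rw [aux_map_pi R hmeas hindep hident G (fun i => ((σ i : Fin G) : ℕ))
        (Fin.val_injective.comp σ.injective),
      aux_map_pi R hmeas hindep hident G (fun i => (i : ℕ)) Fin.val_injective]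
  have comp := base.comp (auxF_measurable G 0)
  have e1 : seqAdvantage R 0 G g = (auxF G 0) ∘ (fun ω (i : Fin G) => R (σ i) ω) := by
    funext ω
    rw [seqAdvantage_eq_auxF R G g hg ω, auxF_comp_swap G j (fun i : Fin G => R i ω)]
    rfl
  have e2 : seqAdvantage R 0 G 0 = (auxF G 0) ∘ (fun ω (i : Fin G) => R i ω) := by
    funext ω
    rw [seqAdvantage_eq_auxF R G 0 hG ω]
    have : (⟨0, hG⟩ : Fin G) = 0 := by ext; simp
    rw [this]
    rfl
  rw [e1, e2]
  exact comp

end Prob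

/-- Asymptotic unit variance of the group-relative advantage: for an i.i.d. sequence
whose common law is not a Dirac measure and stabilizer `ε = 0`, the advantage of the
first coordinate has mean `0` for every `G ≥ 2` and its variance tends to `1`. -/
theorem advantage_mean_zero_variance_tendsto_one
    {Ω : Type*} [MeasureSpace Ω] [IsProbabilityMeasure (ℙ : Measure Ω)]
    (R : ℕ → Ω → ℝ)
    (hmeas : ∀ i, Measurable (R i))
    (hindep : iIndepFun R ℙ)
    (hident : ∀ i j, IdentDistrib (R i) (R j) ℙ ℙ)
    (hnotdirac : ¬ ∃ c : ℝ, Measure.map (R 0) ℙ {c} = 1) :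
    (∀ G : ℕ, 2 ≤ G → ∫ ω, seqAdvantage R 0 G 0 ω ∂ℙ = 0) ∧
      Tendsto (fun G : ℕ => variance (seqAdvantage R 0 G 0) ℙ) atTop (nhds 1) := by
  -- integrability
  have hint : ∀ G, 0 < G → ∀ g < G, Integrable (seqAdvantage R 0 G g) ℙ := by
    intro G hG g hg
    refine ⟨(seqAdvantage_measurable R G hmeas g).aestronglyMeasurable, ?_⟩
    refine HasFiniteIntegral.of_bounded (C := Real.sqrt G) ?_
    exact Filter.Eventually.of_forall fun ω => by
      simpa [Real.norm_eq_abs] using seqAdvantage_abs_le R G hG g hg ω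
  -- mean zero
  have hmean0 : ∀ G, 0 < G → ∫ ω, seqAdvantage R 0 G 0 ω ∂ℙ = 0 := by
    intro G hG
    have hsum : ∑ g ∈ Finset.range G, ∫ ω, seqAdvantage R 0 G g ω ∂ℙ = 0 := by
      rw [← integral_finset_sum _ (fun g hg => hint G hG g (Finset.mem_range.mp hg))]
      simp [aux_sum_adv R G hG]
    have heach : ∀ g ∈ Finset.range G, ∫ ω, seqAdvantage R 0 G g ω ∂ℙ
        = ∫ ω, seqAdvantage R 0 G 0 ω ∂ℙ := fun g hg =>
      (aux_adv_identDistrib R hmeas hindep hident G g (Finset.mem_range.mp hg)).integral_eq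
    rw [Finset.sum_congr rfl heach, Finset.sum_const, Finset.card_range, nsmul_eq_mul] at hsum
    have hGne : (G:ℝ) ≠ 0 := Nat.cast_ne_zero.mpr hG.ne'
    exact (mul_eq_zero.mp hsum).resolve_left hGne
  refine ⟨fun G hG => hmean0 G (by omega), ?_⟩
  -- variance formula
  have hvar : ∀ G, 0 < G → variance (seqAdvantage R 0 G 0) ℙ
      = 1 - (ℙ {ω | seqGroupStd R G ω = 0}).toReal := by
    intro G hG
    have hbdd : ∀ᵐ ω ∂ℙ, ‖seqAdvantage R 0 G 0 ω‖ ≤ Real.sqrt G :=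
      Filter.Eventually.of_forall fun ω => by
        simpa [Real.norm_eq_abs] using seqAdvantage_abs_le R G hG 0 hG ω
    have hmem : MemLp (seqAdvantage R 0 G 0) 2 ℙ :=
      MemLp.of_bound (seqAdvantage_measurable R G hmeas 0).aestronglyMeasurable _ hbdd
    rw [variance_eq_sub hmem, hmean0 G hG]
    have hintsq : ∀ g < G, Integrable (fun ω => (seqAdvantage R 0 G g ω) ^ 2) ℙ := by
      intro g hg
      refine ⟨((seqAdvantage_measurable R G hmeas g).pow_const 2).aestronglyMeasurable, ?_⟩
      refine HasFiniteIntegral.of_bounded (C := (G:ℝ)) ?_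
      refine Filter.Eventually.of_forall fun ω => ?_
      have h1 := seqAdvantage_abs_le R G hG g hg ω
      have h2 : (seqAdvantage R 0 G g ω) ^ 2 ≤ (Real.sqrt G) ^ 2 := by
        rw [← sq_abs]
        exact pow_le_pow_left₀ (abs_nonneg _) h1 2
      rw [Real.sq_sqrt (Nat.cast_nonneg G)] at h2
      rw [Real.norm_eq_abs, abs_of_nonneg (sq_nonneg _)]
      exact h2
    have hBm : MeasurableSet {ω | seqGroupStd R G ω ≠ 0} :=
      ((seqGroupStd_measurable R G hmeas) (measurableSet_singleton 0)).compl
    have hsum2 : ∑ g ∈ Finset.range G, ∫ ω, (seqAdvantage R 0 G g ω) ^ 2 ∂ℙ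
        = (G:ℝ) * (ℙ {ω | seqGroupStd R G ω ≠ 0}).toReal := by
      rw [← integral_finset_sum _ (fun g hg => hintsq g (Finset.mem_range.mp hg))]
      have : ∀ ω, ∑ g ∈ Finset.range G, (seqAdvantage R 0 G g ω) ^ 2
          = Set.indicator {ω | seqGroupStd R G ω ≠ 0} (fun _ => (G:ℝ)) ω := by
        intro ω
        rw [aux_sum_adv_sq R G hG ω, Set.indicator_apply]
        by_cases h : seqGroupStd R G ω = 0 <;> simp [h]
      rw [integral_congr_ae (Filter.Eventually.of_forall this), integral_indicator_const _ hBm,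
        smul_eq_mul, mul_comm]
      rfl
    have heach2 : ∀ g ∈ Finset.range G, ∫ ω, (seqAdvantage R 0 G g ω) ^ 2 ∂ℙ
        = ∫ ω, (seqAdvantage R 0 G 0 ω) ^ 2 ∂ℙ := fun g hg =>
      ((aux_adv_identDistrib R hmeas hindep hident G g (Finset.mem_range.mp hg)).comp
        (measurable_id.pow_const 2)).integral_eq
    rw [Finset.sum_congr rfl heach2, Finset.sum_const, Finset.card_range, nsmul_eq_mul] at hsum2
    have hGne : (G:ℝ) ≠ 0 := Nat.cast_ne_zero.mpr hG.ne'
    have hsq : ∫ ω, (seqAdvantage R 0 G 0 ω) ^ 2 ∂ℙ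
        = (ℙ {ω | seqGroupStd R G ω ≠ 0}).toReal := by
      exact mul_left_cancel₀ hGne hsum2
    have hcompl : {ω | seqGroupStd R G ω ≠ 0} = {ω | seqGroupStd R G ω = 0}ᶜ := rfl
    have hZm : MeasurableSet {ω | seqGroupStd R G ω = 0} :=
      (seqGroupStd_measurable R G hmeas) (measurableSet_singleton 0)
    rw [hcompl, prob_compl_eq_one_sub hZm,
      ENNReal.toReal_sub_of_le prob_le_one ENNReal.one_ne_top, ENNReal.toReal_one] at hsq
    have hgoal : (ℙ : Measure Ω)[(seqAdvantage R 0 G 0) ^ 2]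
        = ∫ ω, (seqAdvantage R 0 G 0 ω) ^ 2 ∂ℙ := by
      apply integral_congr_ae
      exact Filter.Eventually.of_forall fun ω => by simp
    rw [hgoal, hsq]
    ring
  -- the probability bound
  set q := ℙ {ω | R 0 ω = R 1 ω} with hqdef
  have key : ∀ G : ℕ, 0 < G → ℙ {ω | seqGroupStd R G ω = 0} ≤ q ^ (G / 2) := by
    intro G hG
    have hset : {ω | seqGroupStd R G ω = 0} ⊆
        ⋂ k ∈ Finset.range (G/2), {ω | R (2*k) ω = R (2*k+1) ω} := by
      intro ω hω
      rw [Set.mem_setOf_eq, seqGroupStd_eq_zero_iff R G hG ω] at hω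
      refine Set.mem_iInter₂.mpr fun k hk => ?_
      rw [Finset.mem_range] at hk
      have h1 : 2*k < G := by omega
      have h2 : 2*k+1 < G := by omega
      rw [Set.mem_setOf_eq, hω (2*k) h1, hω (2*k+1) h2]
    calc ℙ {ω | seqGroupStd R G ω = 0}
        ≤ ℙ (⋂ k ∈ Finset.range (G/2), {ω | R (2*k) ω = R (2*k+1) ω}) := measure_mono hset
      _ = q ^ (G/2) := aux_inter_prob R hmeas hindep hident (G/2)
  have hqlt : q < 1 := aux_q_lt_one R hmeas hindep hident hnotdirac
  have hqne : q ≠ ⊤ := (lt_of_lt_of_le hqlt le_top).ne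
  have hq1 : q.toReal < 1 := by
    have := (ENNReal.toReal_lt_toReal hqne ENNReal.one_ne_top).mpr hqlt
    simpa using this
  have hdiv : Tendsto (fun G : ℕ => G / 2) atTop atTop :=
    Filter.tendsto_atTop_atTop.mpr fun b => ⟨2*b, fun a ha => by omega⟩
  have htop : Tendsto (fun G : ℕ => q.toReal ^ (G / 2)) atTop (nhds 0) :=
    (tendsto_pow_atTop_nhds_zero_of_lt_one ENNReal.toReal_nonneg hq1).comp hdiv
  have htends0 : Tendsto (fun G : ℕ => (ℙ {ω | seqGroupStd R G ω = 0}).toReal)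
      atTop (nhds 0) := by
    refine tendsto_of_tendsto_of_tendsto_of_le_of_le tendsto_const_nhds htop
      (fun G => ENNReal.toReal_nonneg) (fun G => ?_)
    rcases Nat.eq_zero_or_pos G with h0 | hG
    · subst h0
      simp only [Nat.zero_div, pow_zero]
      have := ENNReal.toReal_mono ENNReal.one_ne_top
        (prob_le_one (μ := ℙ) (s := {ω | seqGroupStd R 0 ω = 0}))
      simpa using this
    · have hfin : q ^ (G / 2) ≠ ⊤ := ENNReal.pow_ne_top hqne
      have := ENNReal.toReal_mono hfin (key G hG)
      rwa [ENNReal.toReal_pow] at this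
  have hfinal : Tendsto (fun G : ℕ => 1 - (ℙ {ω | seqGroupStd R G ω = 0}).toReal)
      atTop (nhds 1) := by
    have := (tendsto_const_nhds (x := (1:ℝ)) (f := atTop)).sub htends0
    simpa using this
  refine hfinal.congr' ?_
  filter_upwards [eventually_ge_atTop 1] with G hG
  exact (hvar G hG).symm
end

section
/- Limiting variance of the group-relative advantage with fixed positive stabilizer: Let R^(1), R^(2), R^(3), … : Ω → ℝ be an i.i.d. sequence of square-integrable random variables on a probability space (Ω, F, P) with common variance σ² > 0, and fix a stabilizer ε > 0. For each G ≥ 2, let Â^(1)_G denote the group-relative advantage of the first coordinate computed from the group R^(1), …, R^(G) with stabilizer ε. Then Var(Â^(1)_G) → σ² / (σ + ε)² as G → ∞. -/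
open MeasureTheory ProbabilityTheory Filter

/-- Limiting variance with a fixed positive stabilizer: for an i.i.d. square-integrable
sequence with variance `σ² > 0` and stabilizer `ε > 0`, the variance of the advantage of
the first coordinate tends to `σ² / (σ + ε)²`. -/
theorem advantage_variance_tendsto_stabilized
    {Ω : Type*} [MeasureSpace Ω] [IsProbabilityMeasure (ℙ : Measure Ω)]
    (R : ℕ → Ω → ℝ)
    (hmeas : ∀ i, Measurable (R i))
    (hindep : iIndepFun R ℙ)
    (hident : ∀ i j, IdentDistrib (R i) (R j) ℙ ℙ)
    (hL2 : ∀ i, MemLp (R i) 2 ℙ)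
    (hvar : 0 < variance (R 0) ℙ)
    (ε : ℝ) (hε : 0 < ε) :
    Tendsto (fun G : ℕ => variance (seqAdvantage R ε G 0) ℙ) atTop
      (nhds (variance (R 0) ℙ / (Real.sqrt (variance (R 0) ℙ) + ε) ^ 2)) := by
  classical
  set v : ℝ := variance (R 0) ℙ with hv_def
  set σ : ℝ := Real.sqrt v with hσ_def
  set μR : ℝ := ∫ ω, R 0 ω with hμR_def
  have hσnn : 0 ≤ σ := Real.sqrt_nonneg _
  have hσε : 0 < σ + ε := by positivity
  set A : Ω → ℝ := fun ω => (σ + ε)⁻¹ * (R 0 ω - μR) with hA_def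
  -- measurability
  have hmean_meas : ∀ G, Measurable (seqGroupMean R G) := fun G => by
    unfold seqGroupMean
    exact (Finset.measurable_sum _ fun i _ => hmeas i).div_const _
  have hstd_meas : ∀ G, Measurable (seqGroupStd R G) := fun G => by
    unfold seqGroupStd
    exact ((Finset.measurable_sum _ fun i _ =>
      ((hmeas i).sub (hmean_meas G)).pow_const 2).div_const _).sqrt
  have hadv_meas : ∀ G, Measurable (seqAdvantage R ε G 0) := fun G => by
    unfold seqAdvantage
    exact ((hmeas 0).sub (hmean_meas G)).div ((hstd_meas G).add_const ε)
  have hstd_nonneg : ∀ G ω, 0 ≤ seqGroupStd R G ω := fun G ω => Real.sqrt_nonneg _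
  have hden_pos : ∀ G ω, 0 < seqGroupStd R G ω + ε := fun G ω =>
    add_pos_of_nonneg_of_pos (hstd_nonneg G ω) hε
  have hden_inv_le : ∀ G ω, (seqGroupStd R G ω + ε)⁻¹ ≤ ε⁻¹ := fun G ω => by
    apply inv_anti₀ hε (le_add_of_nonneg_left (hstd_nonneg G ω))
  -- MemLp facts
  have hdivle : ∀ a b : ℝ, 0 ≤ a → ε ≤ b → a / b ≤ a / ε := by
    intro a b ha hb
    have hb0 : 0 < b := lt_of_lt_of_le hε hb
    rw [div_le_div_iff₀ hb0 hε]
    exact mul_le_mul_of_nonneg_left hb ha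
  have hmean_mem : ∀ G, MemLp (seqGroupMean R G) 2 ℙ := fun G => by
    have h1 : MemLp (∑ i ∈ Finset.range G, R i) 2 ℙ :=
      memLp_finset_sum' _ fun i _ => hL2 i
    have h2 := h1.const_mul ((G : ℝ)⁻¹)
    simp only [Finset.sum_apply] at h2
    have : seqGroupMean R G = fun ω => (G : ℝ)⁻¹ * ∑ i ∈ Finset.range G, R i ω := by
      funext ω; simp [seqGroupMean, div_eq_inv_mul]
    rw [this]; exact h2
  have hA_mem : MemLp A 2 ℙ := ((hL2 0).sub (memLp_const μR)).const_mul _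
  have hadv_mem : ∀ G, MemLp (seqAdvantage R ε G 0) 2 ℙ := fun G => by
    have hbase : MemLp (fun ω => ε⁻¹ * (R 0 ω - seqGroupMean R G ω)) 2 ℙ :=
      ((hL2 0).sub (hmean_mem G)).const_mul _
    refine MemLp.of_le hbase (hadv_meas G).aestronglyMeasurable (ae_of_all _ fun ω => ?_)
    have hd := hden_pos G ω
    simp only [seqAdvantage, Real.norm_eq_abs, abs_div, abs_mul, abs_inv, abs_of_pos hε,
      abs_of_pos hd]
    rw [inv_mul_eq_div]
    exact hdivle _ _ (abs_nonneg _) (le_add_of_nonneg_left (hstd_nonneg G ω))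
  -- strong laws of large numbers
  have hpair : Pairwise (Function.onFun (IndepFun · · ℙ) R) := fun i j hij => hindep.indepFun hij
  have hbar_ae : ∀ᵐ ω, Tendsto (fun G : ℕ => (∑ i ∈ Finset.range G, R i ω) / G)
      atTop (nhds μR) :=
    strong_law_ae_real R ((hL2 0).integrable one_le_two) hpair (fun i => hident i 0)
  set m2 : ℝ := ∫ ω, R 0 ω ^ 2 with hm2_def
  have hsqmeas : Measurable fun x : ℝ => x ^ 2 := measurable_id.pow_const 2
  have hsq_ae : ∀ᵐ ω, Tendsto (fun G : ℕ => (∑ i ∈ Finset.range G, R i ω ^ 2) / G)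
      atTop (nhds m2) :=
    strong_law_ae_real (fun i ω => R i ω ^ 2) ((hL2 0).integrable_sq)
      (fun i j hij => (hindep.indepFun hij).comp hsqmeas hsqmeas)
      (fun i => (hident i 0).comp hsqmeas)
  have hv_eq : v = m2 - μR ^ 2 := by
    have := variance_eq_sub (μ := (ℙ : Measure Ω)) (hL2 0)
    simpa [hm2_def, hμR_def, Pi.pow_apply] using this
  -- a.e. convergence of the group std
  have hstd_ae : ∀ᵐ ω, Tendsto (fun G => seqGroupStd R G ω) atTop (nhds σ) := by
    filter_upwards [hbar_ae, hsq_ae] with ω h1 h2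
    have hlim : Tendsto (fun G : ℕ =>
        (∑ i ∈ Finset.range G, R i ω ^ 2) / G - ((∑ i ∈ Finset.range G, R i ω) / G) ^ 2)
        atTop (nhds (m2 - μR ^ 2)) := h2.sub (h1.pow 2)
    have hsqrt := hlim.sqrt
    rw [← hv_eq] at hsqrt
    refine Tendsto.congr' ?_ hsqrt
    filter_upwards [eventually_ge_atTop 1] with G hG
    have hG0 : (G : ℝ) ≠ 0 := Nat.cast_ne_zero.mpr (by omega)
    unfold seqGroupStd seqGroupMean
    congr 1
    set S := ∑ i ∈ Finset.range G, R i ω with hS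
    have hsum : ∑ g ∈ Finset.range G, (R g ω - S / G) ^ 2
        = (∑ g ∈ Finset.range G, R g ω ^ 2) - 2 * (S / G) * S + G * (S / G) ^ 2 := by
      have hcongr : ∀ g ∈ Finset.range G,
          (R g ω - S / G) ^ 2 = R g ω ^ 2 - 2 * (S / G) * R g ω + (S / G) ^ 2 :=
        fun g _ => by ring
      rw [Finset.sum_congr rfl hcongr, Finset.sum_add_distrib, Finset.sum_sub_distrib,
        ← Finset.mul_sum, Finset.sum_const, Finset.card_range, nsmul_eq_mul, ← hS]
    rw [hsum]
    field_simp
    ring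
  have hinv_ae : ∀ᵐ ω, Tendsto (fun G => (seqGroupStd R G ω + ε)⁻¹)
      atTop (nhds ((σ + ε)⁻¹)) := by
    filter_upwards [hstd_ae] with ω h
    exact (h.add_const ε).inv₀ hσε.ne'
  -- expectation and variance of the group mean
  have hEmean : ∀ G : ℕ, 1 ≤ G → ∫ ω, seqGroupMean R G ω = μR := by
    intro G hG
    have hG0 : (G : ℝ) ≠ 0 := Nat.cast_ne_zero.mpr (by omega)
    unfold seqGroupMean
    rw [integral_div, integral_finset_sum _ fun i _ => (hL2 i).integrable one_le_two,
      Finset.sum_congr rfl fun i _ => ((hident i 0).integral_eq),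
      Finset.sum_const, Finset.card_range, nsmul_eq_mul]
    rw [← hμR_def]
    field_simp
  have hVmean : ∀ G : ℕ, 1 ≤ G → ∫ ω, (seqGroupMean R G ω - μR) ^ 2 = v / G := by
    intro G hG
    have hG0 : (G : ℝ) ≠ 0 := Nat.cast_ne_zero.mpr (by omega)
    have h1 : variance (seqGroupMean R G) ℙ = v / G := by
      have heq : seqGroupMean R G
          = fun ω => (G : ℝ)⁻¹ * (∑ i ∈ Finset.range G, R i) ω := by
        funext ω; simp [seqGroupMean, div_eq_inv_mul, Finset.sum_apply]
      rw [heq, variance_const_mul,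
        IndepFun.variance_sum (fun i _ => hL2 i)
          (fun i _ j _ hij => hindep.indepFun hij)]
      have : ∀ i ∈ Finset.range G, variance (R i) ℙ = v :=
        fun i _ => (hident i 0).variance_eq
      rw [Finset.sum_congr rfl this, Finset.sum_const, Finset.card_range, nsmul_eq_mul]
      field_simp
    have h2 := variance_eq_integral (hmean_mem G).aemeasurable
    rw [h1, hEmean G hG] at h2
    exact h2.symm
  -- the second error term and its square integral
  set t2 : ℕ → Ω → ℝ :=
    fun G ω => (R 0 ω - μR) * ((seqGroupStd R G ω + ε)⁻¹ - (σ + ε)⁻¹) with ht2_def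
  have ht2_meas : ∀ G, Measurable (t2 G) := fun G =>
    ((hmeas 0).sub measurable_const).mul
      ((((hstd_meas G).add_const ε).inv).sub measurable_const)
  have ht2_mem : ∀ G, MemLp (t2 G) 2 ℙ := fun G => by
    have hbase : MemLp (fun ω => (2 * ε⁻¹) * (R 0 ω - μR)) 2 ℙ :=
      ((hL2 0).sub (memLp_const μR)).const_mul _
    refine MemLp.of_le hbase (ht2_meas G).aestronglyMeasurable (ae_of_all _ fun ω => ?_)
    simp only [ht2_def, Real.norm_eq_abs, abs_mul]
    have h1 : |(seqGroupStd R G ω + ε)⁻¹ - (σ + ε)⁻¹| ≤ 2 * ε⁻¹ := by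
      have ha := hden_inv_le G ω
      have hb : (σ + ε)⁻¹ ≤ ε⁻¹ := by
        apply inv_anti₀ hε (le_add_of_nonneg_left hσnn)
      have hc : 0 ≤ (seqGroupStd R G ω + ε)⁻¹ := (inv_pos.mpr (hden_pos G ω)).le
      have hd : 0 ≤ (σ + ε)⁻¹ := (inv_pos.mpr hσε).le
      rw [abs_sub_le_iff]
      constructor <;> linarith
    have h2 := mul_le_mul_of_nonneg_left h1 (abs_nonneg (R 0 ω - μR))
    rw [abs_of_nonneg (by norm_num : (0:ℝ) ≤ 2), abs_of_nonneg (inv_pos.mpr hε).le]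
    nlinarith [h2]
  have hT2 : Tendsto (fun G => ∫ ω, (t2 G ω) ^ 2) atTop (nhds 0) := by
    have hbd : ∀ G : ℕ, ∀ᵐ ω ∂(ℙ : Measure Ω),
        ‖(t2 G ω) ^ 2‖ ≤ (R 0 ω - μR) ^ 2 * (2 * ε⁻¹) ^ 2 := by
      intro G
      refine ae_of_all _ fun ω => ?_
      rw [Real.norm_eq_abs, abs_of_nonneg (sq_nonneg _), ht2_def]
      simp only
      rw [mul_pow]
      refine mul_le_mul_of_nonneg_left ?_ (sq_nonneg _)
      · have ha := hden_inv_le G ω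
        have hb : (σ + ε)⁻¹ ≤ ε⁻¹ := by
          apply inv_anti₀ hε (le_add_of_nonneg_left hσnn)
        have hc : 0 ≤ (seqGroupStd R G ω + ε)⁻¹ := (inv_pos.mpr (hden_pos G ω)).le
        have hd : 0 ≤ (σ + ε)⁻¹ := (inv_pos.mpr hσε).le
        have hepos : 0 < ε⁻¹ := inv_pos.mpr hε
        apply sq_le_sq' <;> linarith
    have hl : ∀ᵐ ω ∂(ℙ : Measure Ω),
        Tendsto (fun G => (t2 G ω) ^ 2) atTop (nhds 0) := by
      filter_upwards [hinv_ae] with ω h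
      have h0 : Tendsto (fun G : ℕ =>
          (R 0 ω - μR) * ((seqGroupStd R G ω + ε)⁻¹ - (σ + ε)⁻¹)) atTop
          (nhds ((R 0 ω - μR) * ((σ + ε)⁻¹ - (σ + ε)⁻¹))) :=
        tendsto_const_nhds.mul (h.sub tendsto_const_nhds)
      have h0' := h0.pow 2
      simpa [ht2_def] using h0'
    have hlim := tendsto_integral_of_dominated_convergence
      (F := fun G ω => (t2 G ω) ^ 2) (f := fun _ => (0 : ℝ))
      (bound := fun ω => (R 0 ω - μR) ^ 2 * (2 * ε⁻¹) ^ 2)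
      (fun G => ((ht2_meas G).pow_const 2).aestronglyMeasurable)
      ((((hL2 0).sub (memLp_const μR)).integrable_sq).mul_const _)
      hbd hl
    simpa using hlim
  -- T1
  have hT1 : Tendsto (fun G => ∫ ω, (seqGroupMean R G ω - μR) ^ 2) atTop (nhds 0) := by
    apply Tendsto.congr' _ (tendsto_const_div_atTop_nhds_zero_nat v)
    filter_upwards [eventually_ge_atTop 1] with G hG
    exact (hVmean G hG).symm
  -- the first error term
  set t1 : ℕ → Ω → ℝ :=
    fun G ω => (μR - seqGroupMean R G ω) * (seqGroupStd R G ω + ε)⁻¹ with ht1_def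
  have ht1_meas : ∀ G, Measurable (t1 G) := fun G =>
    (measurable_const.sub (hmean_meas G)).mul (((hstd_meas G).add_const ε).inv)
  have ht1_mem : ∀ G, MemLp (t1 G) 2 ℙ := fun G => by
    have hbase : MemLp (fun ω => ε⁻¹ * (μR - seqGroupMean R G ω)) 2 ℙ :=
      ((memLp_const μR).sub (hmean_mem G)).const_mul _
    refine MemLp.of_le hbase (ht1_meas G).aestronglyMeasurable (ae_of_all _ fun ω => ?_)
    simp only [ht1_def, Real.norm_eq_abs, abs_mul, abs_inv,
      abs_of_pos (hden_pos G ω), abs_of_pos hε]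
    calc |μR - seqGroupMean R G ω| * (seqGroupStd R G ω + ε)⁻¹
        ≤ |μR - seqGroupMean R G ω| * ε⁻¹ :=
          mul_le_mul_of_nonneg_left (hden_inv_le G ω) (abs_nonneg _)
      _ = ε⁻¹ * |μR - seqGroupMean R G ω| := mul_comm _ _
  -- pointwise decomposition
  have hsplit : ∀ G ω, seqAdvantage R ε G 0 ω - A ω = t1 G ω + t2 G ω := by
    intro G ω
    have hd := (hden_pos G ω).ne'
    simp only [seqAdvantage, hA_def, ht1_def, ht2_def]
    field_simp
    ring
  -- D tends to 0
  set D : ℕ → ℝ := fun G => ∫ ω, (seqAdvantage R ε G 0 ω - A ω) ^ 2 with hD_def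
  have hDle : ∀ G, D G ≤ 2 * (∫ ω, (t1 G ω) ^ 2) + 2 * ∫ ω, (t2 G ω) ^ 2 := by
    intro G
    have hint1 : Integrable (fun ω => (t1 G ω) ^ 2) ℙ := (ht1_mem G).integrable_sq
    have hint2 : Integrable (fun ω => (t2 G ω) ^ 2) ℙ := (ht2_mem G).integrable_sq
    have step1 : D G ≤ ∫ ω, (2 * (t1 G ω) ^ 2 + 2 * (t2 G ω) ^ 2) := by
      apply integral_mono_of_nonneg (ae_of_all _ fun ω => sq_nonneg _)
        ((hint1.const_mul 2).add (hint2.const_mul 2))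
      refine ae_of_all _ fun ω => ?_
      show (seqAdvantage R ε G 0 ω - A ω) ^ 2 ≤ 2 * t1 G ω ^ 2 + 2 * t2 G ω ^ 2
      rw [hsplit G ω]
      nlinarith [sq_nonneg (t1 G ω - t2 G ω)]
    rwa [integral_add (hint1.const_mul 2) (hint2.const_mul 2),
      integral_const_mul, integral_const_mul] at step1
  have hT1' : Tendsto (fun G => ∫ ω, (t1 G ω) ^ 2) atTop (nhds 0) := by
    have hub : ∀ G, ∫ ω, (t1 G ω) ^ 2 ≤ ε⁻¹ ^ 2 * ∫ ω, (seqGroupMean R G ω - μR) ^ 2 := by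
      intro G
      rw [← integral_const_mul]
      apply integral_mono_of_nonneg (ae_of_all _ fun ω => sq_nonneg _)
        ((((hmean_mem G).sub (memLp_const μR)).integrable_sq).const_mul _)
      refine ae_of_all _ fun ω => ?_
      have h1 := hden_inv_le G ω
      have h2 : 0 ≤ (seqGroupStd R G ω + ε)⁻¹ := (inv_pos.mpr (hden_pos G ω)).le
      have heq : (t1 G ω) ^ 2
          = (seqGroupMean R G ω - μR) ^ 2 * ((seqGroupStd R G ω + ε)⁻¹) ^ 2 := by
        rw [ht1_def]; ring
      show t1 G ω ^ 2 ≤ ε⁻¹ ^ 2 * (seqGroupMean R G ω - μR) ^ 2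
      rw [heq, mul_comm (ε⁻¹ ^ 2)]
      refine mul_le_mul_of_nonneg_left ?_ (sq_nonneg _)
      exact pow_le_pow_left₀ h2 h1 2
    have hlim : Tendsto (fun G => ε⁻¹ ^ 2 * ∫ ω, (seqGroupMean R G ω - μR) ^ 2)
        atTop (nhds (ε⁻¹ ^ 2 * 0)) := hT1.const_mul _
    rw [mul_zero] at hlim
    refine squeeze_zero' (Eventually.of_forall fun G => integral_nonneg fun ω => sq_nonneg _)
      (Eventually.of_forall hub) hlim
  have hDtendsto : Tendsto D atTop (nhds 0) := by
    have hub : Tendsto (fun G => 2 * (∫ ω, (t1 G ω) ^ 2) + 2 * ∫ ω, (t2 G ω) ^ 2)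
        atTop (nhds 0) := by simpa using (hT1'.const_mul 2).add (hT2.const_mul 2)
    exact squeeze_zero' (Eventually.of_forall fun G => integral_nonneg fun ω => sq_nonneg _)
      (Eventually.of_forall hDle) hub
  -- a Cauchy–Schwarz helper
  have holder : ∀ f g : Ω → ℝ, MemLp f 2 ℙ → MemLp g 2 ℙ →
      ∫ ω, |f ω| * |g ω| ≤ Real.sqrt (∫ ω, f ω ^ 2) * Real.sqrt (∫ ω, g ω ^ 2) := by
    intro f g hf hg
    have h2 : (ENNReal.ofReal (2 : ℝ)) = 2 := by norm_num
    have hconj : Real.HolderConjugate 2 2 := Real.HolderConjugate.two_two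
    have hH := integral_mul_le_Lp_mul_Lq_of_nonneg hconj
      (ae_of_all _ fun ω => abs_nonneg (f ω)) (ae_of_all _ fun ω => abs_nonneg (g ω))
      (h2 ▸ hf.abs) (h2 ▸ hg.abs)
    calc ∫ ω, |f ω| * |g ω|
        ≤ (∫ ω, |f ω| ^ (2 : ℝ)) ^ ((1 : ℝ) / 2) * (∫ ω, |g ω| ^ (2 : ℝ)) ^ ((1 : ℝ) / 2) := hH
      _ = Real.sqrt (∫ ω, f ω ^ 2) * Real.sqrt (∫ ω, g ω ^ 2) := by
          have hf2 : ∫ ω, |f ω| ^ (2 : ℝ) = ∫ ω, f ω ^ 2 :=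
            integral_congr_ae (ae_of_all _ fun ω => by
              show |f ω| ^ (2 : ℝ) = f ω ^ 2
              rw [show ((2 : ℝ) = ((2 : ℕ) : ℝ)) by norm_num, Real.rpow_natCast, sq_abs])
          have hg2 : ∫ ω, |g ω| ^ (2 : ℝ) = ∫ ω, g ω ^ 2 :=
            integral_congr_ae (ae_of_all _ fun ω => by
              show |g ω| ^ (2 : ℝ) = g ω ^ 2
              rw [show ((2 : ℝ) = ((2 : ℕ) : ℝ)) by norm_num, Real.rpow_natCast, sq_abs])
          rw [Real.sqrt_eq_rpow, Real.sqrt_eq_rpow, hf2, hg2]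
  -- convergence of first moments
  have hInt1 : Tendsto (fun G => ∫ ω, seqAdvantage R ε G 0 ω) atTop (nhds (∫ ω, A ω)) := by
    have key : ∀ G, |(∫ ω, seqAdvantage R ε G 0 ω) - ∫ ω, A ω| ≤ Real.sqrt (D G) := by
      intro G
      rw [← integral_sub ((hadv_mem G).integrable one_le_two) (hA_mem.integrable one_le_two)]
      have h1 : |∫ ω, (seqAdvantage R ε G 0 ω - A ω)|
          ≤ ∫ ω, |seqAdvantage R ε G 0 ω - A ω| := by
        simpa [Real.norm_eq_abs] using
          norm_integral_le_integral_norm (fun ω => seqAdvantage R ε G 0 ω - A ω)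
      have h2 := holder (fun ω => seqAdvantage R ε G 0 ω - A ω) (fun _ => (1 : ℝ))
        ((hadv_mem G).sub hA_mem) (memLp_const 1)
      simp only [abs_one, mul_one, one_pow, integral_const, measure_univ,
        ENNReal.toReal_one, smul_eq_mul, Real.sqrt_one, probReal_univ] at h2
      exact h1.trans (le_of_le_of_eq h2 (by rw [hD_def]))
    have hdiff : Tendsto (fun G => (∫ ω, seqAdvantage R ε G 0 ω) - ∫ ω, A ω)
        atTop (nhds 0) := by
      refine squeeze_zero_norm (fun G => by simpa [Real.norm_eq_abs] using key G) ?_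
      simpa using hDtendsto.sqrt
    simpa using hdiff.add (tendsto_const_nhds (x := ∫ ω, A ω))
  -- convergence of second moments
  have hInt2 : Tendsto (fun G => ∫ ω, (seqAdvantage R ε G 0 ω) ^ 2) atTop
      (nhds (∫ ω, (A ω) ^ 2)) := by
    have key : ∀ G, |(∫ ω, (seqAdvantage R ε G 0 ω) ^ 2) - ∫ ω, (A ω) ^ 2|
        ≤ Real.sqrt (D G) * Real.sqrt (2 * D G + 8 * ∫ ω, (A ω) ^ 2) := by
      intro G
      rw [← integral_sub (hadv_mem G).integrable_sq hA_mem.integrable_sq]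
      have habs : ∀ ω : Ω, |seqAdvantage R ε G 0 ω ^ 2 - A ω ^ 2|
          = |seqAdvantage R ε G 0 ω - A ω| * |seqAdvantage R ε G 0 ω + A ω| := fun ω => by
        rw [← abs_mul]; congr 1; ring
      have h1 : |∫ ω, (seqAdvantage R ε G 0 ω ^ 2 - A ω ^ 2)|
          ≤ ∫ ω, |seqAdvantage R ε G 0 ω - A ω| * |seqAdvantage R ε G 0 ω + A ω| := by
        calc |∫ ω, (seqAdvantage R ε G 0 ω ^ 2 - A ω ^ 2)|
            ≤ ∫ ω, |seqAdvantage R ε G 0 ω ^ 2 - A ω ^ 2| := by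
              simpa [Real.norm_eq_abs] using
                norm_integral_le_integral_norm (fun ω => seqAdvantage R ε G 0 ω ^ 2 - A ω ^ 2)
          _ = ∫ ω, |seqAdvantage R ε G 0 ω - A ω| * |seqAdvantage R ε G 0 ω + A ω| :=
              integral_congr_ae (ae_of_all _ habs)
      have h2 := holder (fun ω => seqAdvantage R ε G 0 ω - A ω)
        (fun ω => seqAdvantage R ε G 0 ω + A ω) ((hadv_mem G).sub hA_mem)
        ((hadv_mem G).add hA_mem)
      have h3 : ∫ ω, (seqAdvantage R ε G 0 ω + A ω) ^ 2
          ≤ 2 * D G + 8 * ∫ ω, (A ω) ^ 2 := by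
        have hi0 : Integrable (fun ω => (seqAdvantage R ε G 0 ω - A ω) ^ 2) ℙ :=
          ((hadv_mem G).sub hA_mem).integrable_sq
        have hi1 : Integrable (fun ω => 2 * (seqAdvantage R ε G 0 ω - A ω) ^ 2) ℙ :=
          hi0.const_mul 2
        have hi2 : Integrable (fun ω => 8 * (A ω) ^ 2) ℙ :=
          (hA_mem.integrable_sq).const_mul 8
        have hintsum : Integrable
            (fun ω => 2 * (seqAdvantage R ε G 0 ω - A ω) ^ 2 + 8 * (A ω) ^ 2) ℙ :=
          hi1.add hi2
        have hpt : ∀ ω : Ω, (seqAdvantage R ε G 0 ω + A ω) ^ 2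
            ≤ 2 * (seqAdvantage R ε G 0 ω - A ω) ^ 2 + 8 * (A ω) ^ 2 := by
          intro ω
          nlinarith [sq_nonneg (seqAdvantage R ε G 0 ω - A ω - 2 * A ω)]
        have := integral_mono_of_nonneg
          (ae_of_all _ fun ω => sq_nonneg (seqAdvantage R ε G 0 ω + A ω)) hintsum
          (ae_of_all _ hpt)
        rwa [integral_add hi1 hi2, integral_const_mul, integral_const_mul] at this
      calc |∫ ω, (seqAdvantage R ε G 0 ω ^ 2 - A ω ^ 2)|
          ≤ ∫ ω, |seqAdvantage R ε G 0 ω - A ω| * |seqAdvantage R ε G 0 ω + A ω| := h1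
        _ ≤ Real.sqrt (∫ ω, (seqAdvantage R ε G 0 ω - A ω) ^ 2)
            * Real.sqrt (∫ ω, (seqAdvantage R ε G 0 ω + A ω) ^ 2) := h2
        _ ≤ Real.sqrt (D G) * Real.sqrt (2 * D G + 8 * ∫ ω, (A ω) ^ 2) := by
            have e1 : ∫ ω, (seqAdvantage R ε G 0 ω - A ω) ^ 2 = D G := rfl
            rw [e1]
            exact mul_le_mul_of_nonneg_left (Real.sqrt_le_sqrt h3) (Real.sqrt_nonneg _)
    have hlim2 : Tendsto (fun G => Real.sqrt (D G)
        * Real.sqrt (2 * D G + 8 * ∫ ω, (A ω) ^ 2)) atTop (nhds 0) := by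
      have h1 : Tendsto (fun G => Real.sqrt (D G)) atTop (nhds 0) := by
        simpa using hDtendsto.sqrt
      have h2 : Tendsto (fun G => Real.sqrt (2 * D G + 8 * ∫ ω, (A ω) ^ 2)) atTop
          (nhds (Real.sqrt (8 * ∫ ω, (A ω) ^ 2))) := by
        have := ((hDtendsto.const_mul 2).add
          (tendsto_const_nhds (x := 8 * ∫ ω, (A ω) ^ 2))).sqrt
        simpa using this
      simpa using h1.mul h2
    have hdiff : Tendsto (fun G => (∫ ω, (seqAdvantage R ε G 0 ω) ^ 2)
        - ∫ ω, (A ω) ^ 2) atTop (nhds 0) := squeeze_zero_norm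
      (fun G => by simpa [Real.norm_eq_abs] using key G) hlim2
    have hfin := hdiff.add (tendsto_const_nhds (x := ∫ ω, (A ω) ^ 2))
    rw [zero_add] at hfin
    exact hfin.congr fun G => by ring
  -- values of the limit integrals
  have hIA : ∫ ω, A ω = 0 := by
    simp only [hA_def]
    rw [integral_const_mul, integral_sub ((hL2 0).integrable one_le_two)
      (integrable_const _), integral_const]
    simp [← hμR_def]
  have hR0var : ∫ ω, (R 0 ω - μR) ^ 2 = v := by
    have h2 := variance_eq_integral (hL2 0).aemeasurable
    exact h2.symm
  have hIA2 : ∫ ω, (A ω) ^ 2 = v / (σ + ε) ^ 2 := by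
    have heq : ∀ ω : Ω, (A ω) ^ 2 = (σ + ε)⁻¹ ^ 2 * (R 0 ω - μR) ^ 2 := fun ω => by
      simp only [hA_def]; ring
    rw [integral_congr_ae (ae_of_all _ heq), integral_const_mul, hR0var]
    field_simp
  -- conclude
  have hvar_eq : ∀ G, variance (seqAdvantage R ε G 0) ℙ
      = (∫ ω, (seqAdvantage R ε G 0 ω) ^ 2) - (∫ ω, seqAdvantage R ε G 0 ω) ^ 2 := by
    intro G
    rw [variance_eq_sub (hadv_mem G)]
    rfl
  have hfinal := hInt2.sub (hInt1.pow 2)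
  rw [hIA, hIA2] at hfinal
  have : Tendsto (fun G => (∫ ω, (seqAdvantage R ε G 0 ω) ^ 2)
      - (∫ ω, seqAdvantage R ε G 0 ω) ^ 2) atTop (nhds (v / (σ + ε) ^ 2)) := by
    simpa using hfinal
  exact this.congr fun G => (hvar_eq G).symm
end
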